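/- Let Δ be a simplicial complex on {x_1,…,x_n} over a field K and let k be an integer with −1 ≤ k < dim Δ. Then the graded Betti numbers of the k-skeleton agree with those of Δ strictly above the row k + 1 and vanish strictly below it: β_{i,i+j}(K[Δ^k]) = β_{i,i+j}(K[Δ]) for all i ≥ 0 and all j < k + 1, and β_{i,i+j}(K[Δ^k]) = 0 for all i ≥ 0 and all j > k + 1. -/

import Mathlib

open MvPolynomial

noncomputable section

/-- An abstract simplicial complex on the vertex set `{x_1, …, x_n}` (modelled as `Fin n`):
a collection of finite subsets (faces) containing the empty set and closed under subsets.
(That every singleton is a face is imposed as a hypothesis where relevant.) -/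
structure ASC (n : ℕ) where
  faces : Finset (Finset (Fin n))
  empty_mem : ∅ ∈ faces
  down_closed : ∀ F ∈ faces, ∀ G ⊆ F, G ∈ faces

namespace ASC

variable {n : ℕ}

/-- The dimension of a simplicial complex: the maximum of `|F| - 1` over all faces `F`. -/
def dim (Δ : ASC n) : ℤ := ((Δ.faces.sup Finset.card : ℕ) : ℤ) - 1

/-- A minimal non-face: a set which is not a face, all of whose proper subsets are faces. -/
def IsMinimalNonface (Δ : ASC n) (N : Finset (Fin n)) : Prop :=
  N ∉ Δ.faces ∧ ∀ G ⊂ N, G ∈ Δ.faces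

/-- The `k`-skeleton: all faces of dimension at most `k`, i.e. of cardinality at most `k + 1`. -/
def skel (Δ : ASC n) (k : ℤ) : ASC n where
  faces := insert ∅ (Δ.faces.filter fun F => (F.card : ℤ) ≤ k + 1)
  empty_mem := Finset.mem_insert_self _ _
  down_closed := by
    intro F hF G hG
    rcases Finset.mem_insert.mp hF with h | h
    · exact Finset.mem_insert.mpr (Or.inl (by
        subst h
        simpa using Finset.subset_empty.mp hG))
    · obtain ⟨h1, h2⟩ := Finset.mem_filter.mp h
      exact Finset.mem_insert.mpr (Or.inr (Finset.mem_filter.mpr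
        ⟨Δ.down_closed F h1 G hG,
         le_trans (by exact_mod_cast Finset.card_le_card hG) h2⟩))

/-- The induced subcomplex on a subset `W` of the vertex set. -/
def induce (Δ : ASC n) (W : Finset (Fin n)) : ASC n where
  faces := Δ.faces.filter fun F => F ⊆ W
  empty_mem := Finset.mem_filter.mpr ⟨Δ.empty_mem, Finset.empty_subset _⟩
  down_closed := by
    intro F hF G hG
    obtain ⟨h1, h2⟩ := Finset.mem_filter.mp hF
    exact Finset.mem_filter.mpr ⟨Δ.down_closed F h1 G hG, hG.trans h2⟩

/-- `fvec Δ r` is the number of faces of `Δ` of cardinality `r`, i.e. the entry `f_{r-1}`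
of the `f`-vector of `Δ` (so `fvec Δ 0 = f_{-1} = 1`). -/
def fvec (Δ : ASC n) (r : ℕ) : ℕ := (Δ.faces.filter fun F => F.card = r).card

/-- A facet: a maximal face. -/
def IsFacet (Δ : ASC n) (F : Finset (Fin n)) : Prop :=
  F ∈ Δ.faces ∧ ∀ G ∈ Δ.faces, F ⊆ G → G = F

/-- A simplicial complex is pure if all its facets have the same cardinality. -/
def IsPure (Δ : ASC n) : Prop :=
  ∀ F G, Δ.IsFacet F → Δ.IsFacet G → F.card = G.card

end ASC

variable (K : Type) [Field K] (n : ℕ)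

/-- The Stanley–Reisner ideal of `Δ`: generated by the squarefree monomials
`∏_{x ∈ N} x` as `N` ranges over the minimal non-faces of `Δ`. -/
def srIdeal (Δ : ASC n) : Ideal (MvPolynomial (Fin n) K) :=
  Ideal.span {p | ∃ N, Δ.IsMinimalNonface N ∧ p = ∏ v ∈ N, X v}

/-- The total degree of an exponent vector. -/
def mdeg {n : ℕ} (m : Fin n →₀ ℕ) : ℕ := m.sum fun _ e => e

lemma mdeg_add {n : ℕ} (a b : Fin n →₀ ℕ) : mdeg (a + b) = mdeg a + mdeg b := by
  simpa [mdeg] using Finsupp.sum_add_index' (f := a) (g := b)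
    (h := fun (_ : Fin n) (e : ℕ) => e) (fun _ => rfl) (fun _ _ _ => rfl)

lemma mdeg_single {n : ℕ} (s : Fin n) (e : ℕ) : mdeg (Finsupp.single s e) = e := by
  simp [mdeg]

/-- The basis of the degree-`j` graded piece of the `i`-th term of the Koszul complex
of `x_1, …, x_n` tensored with `R/I` (for a monomial ideal `I`): pairs `(S, m)` where
`S` is an `i`-element subset of the variables and `m` is the exponent vector of a
monomial not in `I`, with `deg m + i = j`. -/
def KoszulBasis (I : Ideal (MvPolynomial (Fin n) K)) (i j : ℕ) :=
  {p : Finset (Fin n) × (Fin n →₀ ℕ) //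
    p.1.card = i ∧ mdeg p.2 + i = j ∧ monomial p.2 (1 : K) ∉ I}

/-- The degree-`j` graded piece of the `i`-th term of the Koszul complex tensored with `R/I`. -/
abbrev KoszulChain (I : Ideal (MvPolynomial (Fin n) K)) (i j : ℕ) :=
  KoszulBasis K n I i j →₀ K

open Classical in
/-- The image of a basis element under the Koszul differential. -/
def koszulDElem (I : Ideal (MvPolynomial (Fin n) K)) (i j : ℕ)
    (b : KoszulBasis K n I (i + 1) j) : KoszulChain K n I i j :=
  ∑ s ∈ b.1.1.attach,
    ((-1 : K) ^ (b.1.1.filter fun t => t < s.1).card) •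
      (if h : monomial (b.1.2 + Finsupp.single s.1 1) (1 : K) ∈ I then 0
       else Finsupp.single
         ⟨(b.1.1.erase s.1, b.1.2 + Finsupp.single s.1 1),
          ⟨by rw [Finset.card_erase_of_mem s.2, b.2.1]; rfl,
           by have hd := b.2.2.1; rw [mdeg_add, mdeg_single]; omega,
           h⟩⟩ (1 : K))

/-- The Koszul differential (in degree `j`) from homological position `i + 1` to `i`. -/
def koszulD (I : Ideal (MvPolynomial (Fin n) K)) (i j : ℕ) :
    KoszulChain K n I (i + 1) j →ₗ[K] KoszulChain K n I i j :=
  Finsupp.lsum K fun b => LinearMap.toSpanSingleton K _ (koszulDElem K n I i j b)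

/-- The cycles of the Koszul complex of `R/I` at homological position `i`, degree `j`. -/
def koszulCycles (I : Ideal (MvPolynomial (Fin n) K)) (i j : ℕ) :
    Submodule K (KoszulChain K n I i j) :=
  match i with
  | 0 => ⊤
  | Nat.succ i' => LinearMap.ker (koszulD K n I i' j)

/-- The graded Betti number `β_{i,j}(R/I)` of the quotient by a monomial ideal `I`:
the dimension of the degree-`j` part of `Tor_i(R/I, K)`, computed as the `i`-th Koszul
homology of `R/I` in degree `j`. -/
def bettiQuot (I : Ideal (MvPolynomial (Fin n) K)) (i j : ℕ) : ℕ :=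
  Module.finrank K (koszulCycles K n I i j)
    - Module.finrank K (LinearMap.range (koszulD K n I i j))

/-- The graded Betti number `β_{i,j}(I)` of a monomial ideal, `β_{i,j}(I) = β_{i+1,j}(R/I)`. -/
def bettiIdeal (I : Ideal (MvPolynomial (Fin n) K)) (i j : ℕ) : ℕ :=
  bettiQuot K n I (i + 1) j

/-- The graded Betti numbers `β_{i,j}(K[Δ])` of a Stanley–Reisner ring. -/
def bettiSR (Δ : ASC n) (i j : ℕ) : ℕ := bettiQuot K n (srIdeal K n Δ) i j

/-- Castelnuovo–Mumford regularity of `R/I`: `max { j - i : β_{i,j}(R/I) ≠ 0 }`. -/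
def regQuot (I : Ideal (MvPolynomial (Fin n) K)) : ℕ :=
  sSup {d | ∃ i j, bettiQuot K n I i j ≠ 0 ∧ d = j - i}

/-- Castelnuovo–Mumford regularity of an ideal: `max { j - i : β_{i,j}(I) ≠ 0 }`. -/
def regIdeal (I : Ideal (MvPolynomial (Fin n) K)) : ℕ :=
  sSup {d | ∃ i j, bettiIdeal K n I i j ≠ 0 ∧ d = j - i}

/-- Projective dimension of `R/I`: `max { i : β_{i,j}(R/I) ≠ 0 for some j }`. -/
def pdimQuot (I : Ideal (MvPolynomial (Fin n) K)) : ℕ :=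
  sSup {i | ∃ j, bettiQuot K n I i j ≠ 0}

/-- `m` is (the exponent vector of) a minimal monomial generator of the monomial ideal `I`. -/
def IsMinGen (I : Ideal (MvPolynomial (Fin n) K)) (m : Fin n →₀ ℕ) : Prop :=
  monomial m (1 : K) ∈ I ∧
    ∀ s : Fin n, m s ≠ 0 → monomial (m - Finsupp.single s 1) (1 : K) ∉ I

/-- `ω(I)`: the maximum degree of a minimal monomial generator of `I`. -/
def omegaIdeal (I : Ideal (MvPolynomial (Fin n) K)) : ℕ :=
  sSup {d | ∃ m, IsMinGen K n I m ∧ mdeg m = d}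

/-- A monomial ideal: an ideal generated by monomials. -/
def IsMonomialIdeal (I : Ideal (MvPolynomial (Fin n) K)) : Prop :=
  ∃ S : Set (Fin n →₀ ℕ),
    I = Ideal.span ((fun m => (monomial m (1 : K) : MvPolynomial (Fin n) K)) '' S)

/-- A squarefree monomial ideal: an ideal generated by squarefree monomials. -/
def IsSqfreeMonomialIdeal (I : Ideal (MvPolynomial (Fin n) K)) : Prop :=
  ∃ S : Set (Fin n →₀ ℕ), (∀ m ∈ S, ∀ s, m s ≤ 1) ∧
    I = Ideal.span ((fun m => (monomial m (1 : K) : MvPolynomial (Fin n) K)) '' S)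

/-- A monomial ideal `I` has a degree resolution if `reg I = ω(I)`, equivalently
`β_{i,j}(I) = 0` for all `j > i + ω(I)`. -/
def HasDegreeResolution (I : Ideal (MvPolynomial (Fin n) K)) : Prop :=
  regIdeal K n I = omegaIdeal K n I

/-- `I` has a linear resolution: `I` is generated in a single degree `d` and
`β_{i,j}(I) = 0` for all `j ≠ i + d`. -/
def HasLinearResolution (I : Ideal (MvPolynomial (Fin n) K)) : Prop :=
  ∃ d : ℕ, (∀ m, IsMinGen K n I m → mdeg m = d) ∧
    ∀ i j, j ≠ i + d → bettiIdeal K n I i j = 0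

/-- The truncation `I_k`: the ideal generated by the squarefree monomials of degree `k`
belonging to `I`. -/
def truncation (I : Ideal (MvPolynomial (Fin n) K)) (k : ℕ) :
    Ideal (MvPolynomial (Fin n) K) :=
  Ideal.span {p | ∃ m : Fin n →₀ ℕ, (∀ s, m s ≤ 1) ∧ mdeg m = k ∧
    monomial m (1 : K) ∈ I ∧ p = monomial m (1 : K)}

/-- The height of an ideal: the infimum of the heights of the primes containing it. -/
def heightIdeal (I : Ideal (MvPolynomial (Fin n) K)) : ℕ∞ :=
  ⨅ p ∈ {p : PrimeSpectrum (MvPolynomial (Fin n) K) | I ≤ p.asIdeal}, Order.height p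

end

noncomputable section Aux
variable {K : Type} [Field K] {n : ℕ}

/-- exponent vector of the squarefree monomial with support `S` -/
def chiS (S : Finset (Fin n)) : Fin n →₀ ℕ := ∑ v ∈ S, Finsupp.single v 1

lemma chiS_apply (S : Finset (Fin n)) (t : Fin n) :
    chiS S t = if t ∈ S then 1 else 0 := by
  classical
  simp [chiS, Finset.sum_apply', Finsupp.single_apply]

lemma prod_X_eq_monomial (N : Finset (Fin n)) :
    (∏ v ∈ N, (X v : MvPolynomial (Fin n) K)) = monomial (chiS N) 1 := by
  classical
  induction N using Finset.induction_on with
  | empty => simp [chiS]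
  | @insert a s ha ih =>
    have hc : chiS (insert a s) = Finsupp.single a 1 + chiS s := by
      rw [chiS, chiS, Finset.sum_insert ha]
    rw [Finset.prod_insert ha, ih, hc, X, monomial_mul, one_mul]

lemma exists_min_nonface (Γ : ASC n) (A : Finset (Fin n)) (hA : A ∉ Γ.faces) :
    ∃ N, N ⊆ A ∧ Γ.IsMinimalNonface N := by
  classical
  induction A using Finset.strongInduction with
  | _ A ih =>
    by_cases h : ∀ G ⊂ A, G ∈ Γ.faces
    · exact ⟨A, subset_rfl, hA, h⟩
    · push_neg at h
      obtain ⟨G, hG1, hG2⟩ := h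
      obtain ⟨N, hN1, hN2⟩ := ih G hG1 hG2
      exact ⟨N, hN1.trans hG1.subset, hN2⟩

lemma monomial_mem_srIdeal_iff (Γ : ASC n) (m : Fin n →₀ ℕ) :
    monomial m (1:K) ∈ srIdeal K n Γ ↔ m.support ∉ Γ.faces := by
  classical
  have hset : {p : MvPolynomial (Fin n) K | ∃ N, Γ.IsMinimalNonface N ∧ p = ∏ v ∈ N, X v}
      = (fun a => monomial a (1:K)) '' {a | ∃ N, Γ.IsMinimalNonface N ∧ a = chiS N} := by
    ext p
    constructor
    · rintro ⟨N, hN, rfl⟩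
      exact ⟨chiS N, ⟨N, hN, rfl⟩, (prod_X_eq_monomial N).symm⟩
    · rintro ⟨a, ⟨N, hN, rfl⟩, rfl⟩
      exact ⟨N, hN, (prod_X_eq_monomial N).symm⟩
  rw [srIdeal, hset, mem_ideal_span_monomial_image]
  rw [support_monomial, if_neg (one_ne_zero)]
  simp only [Finset.mem_singleton, forall_eq]
  constructor
  · rintro ⟨si, ⟨N, hN, rfl⟩, hle⟩
    intro hmem
    refine hN.1 (Γ.down_closed _ hmem N ?_)
    intro v hv
    have := hle v
    rw [chiS_apply, if_pos hv] at this
    exact Finsupp.mem_support_iff.mpr (by omega)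
  · intro h
    obtain ⟨N, hN1, hN2⟩ := exists_min_nonface Γ _ h
    refine ⟨chiS N, ⟨N, hN2, rfl⟩, ?_⟩
    intro v
    rw [chiS_apply]
    split
    · next hv => have := Finsupp.mem_support_iff.mp (hN1 hv); omega
    · omega

end Aux

noncomputable section Transfer
variable (K : Type) [Field K] (n : ℕ)

/-- Equivalence of Koszul bases for two ideals with the same monomials in the relevant degree. -/
def kbEquiv (I₁ I₂ : Ideal (MvPolynomial (Fin n) K)) (i j : ℕ)
    (h : ∀ m : Fin n →₀ ℕ, mdeg m + i = j → (monomial m (1:K) ∈ I₁ ↔ monomial m (1:K) ∈ I₂)) :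
    KoszulBasis K n I₁ i j ≃ KoszulBasis K n I₂ i j where
  toFun b := ⟨b.1, b.2.1, b.2.2.1, fun hm => b.2.2.2 ((h _ b.2.2.1).mpr hm)⟩
  invFun b := ⟨b.1, b.2.1, b.2.2.1, fun hm => b.2.2.2 ((h _ b.2.2.1).mp hm)⟩
  left_inv b := rfl
  right_inv b := rfl

lemma kdElem_comm (I₁ I₂ : Ideal (MvPolynomial (Fin n) K)) (i j : ℕ)
    (h : ∀ m : Fin n →₀ ℕ, mdeg m + i ≤ j → (monomial m (1:K) ∈ I₁ ↔ monomial m (1:K) ∈ I₂))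
    (b : KoszulBasis K n I₁ (i+1) j) :
    (Finsupp.domLCongr (kbEquiv K n I₁ I₂ i j (fun m hm => h m hm.le))
        : KoszulChain K n I₁ i j ≃ₗ[K] KoszulChain K n I₂ i j)
        (koszulDElem K n I₁ i j b)
      = koszulDElem K n I₂ i j
          (kbEquiv K n I₁ I₂ (i+1) j (fun m hm => h m (by omega)) b) := by
  classical
  unfold koszulDElem
  rw [map_sum]
  refine Finset.sum_congr rfl fun s _ => ?_
  rw [LinearEquiv.map_smul]
  congr 1
  have hdeg : mdeg (b.1.2 + Finsupp.single s.1 1) + i ≤ j := by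
    have := b.2.2.1
    rw [mdeg_add, mdeg_single]; omega
  have hmem : (monomial (b.1.2 + Finsupp.single s.1 1) (1:K) ∈ I₁)
      = (monomial (b.1.2 + Finsupp.single s.1 1) (1:K) ∈ I₂) := propext (h _ hdeg)
  by_cases hP : monomial (b.1.2 + Finsupp.single s.1 1) (1:K) ∈ I₁
  · rw [dif_pos hP, dif_pos (show monomial ((kbEquiv K n I₁ I₂ (i+1) j
        (fun m hm => h m (by omega)) b).1.2 + Finsupp.single s.1 1) (1:K) ∈ I₂
      from (h _ hdeg).mp hP)]
    exact map_zero _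
  · rw [dif_neg hP, dif_neg (show ¬ monomial ((kbEquiv K n I₁ I₂ (i+1) j
        (fun m hm => h m (by omega)) b).1.2 + Finsupp.single s.1 1) (1:K) ∈ I₂
      from fun hc => hP ((h _ hdeg).mpr hc))]
    refine (Finsupp.domLCongr_single _ _ _).trans ?_
    congr 1

lemma kd_comm (I₁ I₂ : Ideal (MvPolynomial (Fin n) K)) (i j : ℕ)
    (h : ∀ m : Fin n →₀ ℕ, mdeg m + i ≤ j → (monomial m (1:K) ∈ I₁ ↔ monomial m (1:K) ∈ I₂)) :
    (Finsupp.domLCongr (kbEquiv K n I₁ I₂ i j (fun m hm => h m hm.le))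
        : KoszulChain K n I₁ i j ≃ₗ[K] KoszulChain K n I₂ i j).toLinearMap
        ∘ₗ koszulD K n I₁ i j
      = koszulD K n I₂ i j ∘ₗ
        (Finsupp.domLCongr (kbEquiv K n I₁ I₂ (i+1) j (fun m hm => h m (by omega)))
          : KoszulChain K n I₁ (i+1) j ≃ₗ[K] KoszulChain K n I₂ (i+1) j).toLinearMap := by
  classical
  apply Finsupp.lhom_ext
  intro b c
  simp only [LinearMap.comp_apply, LinearEquiv.coe_coe, Finsupp.domLCongr_single,
    koszulD, Finsupp.lsum_single, LinearMap.toSpanSingleton_apply]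
  rw [LinearEquiv.map_smul]
  rw [kdElem_comm K n I₁ I₂ i j h b]

lemma bettiQuot_congr (I₁ I₂ : Ideal (MvPolynomial (Fin n) K)) (i j : ℕ)
    (h : ∀ m : Fin n →₀ ℕ, mdeg m + i ≤ j + 1 →
      (monomial m (1:K) ∈ I₁ ↔ monomial m (1:K) ∈ I₂)) :
    bettiQuot K n I₁ i j = bettiQuot K n I₂ i j := by
  classical
  have hErng : Module.finrank K (LinearMap.range (koszulD K n I₂ i j))
      = Module.finrank K (LinearMap.range (koszulD K n I₁ i j)) := by
    have hcomm := kd_comm K n I₁ I₂ i j (fun m hm => h m (by omega))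
    set E0 := (Finsupp.domLCongr (kbEquiv K n I₁ I₂ i j
      (fun m hm => h m (by omega))) : KoszulChain K n I₁ i j ≃ₗ[K] KoszulChain K n I₂ i j)
    set E1 := (Finsupp.domLCongr (kbEquiv K n I₁ I₂ (i+1) j
      (fun m hm => h m (by omega))) : KoszulChain K n I₁ (i+1) j ≃ₗ[K] KoszulChain K n I₂ (i+1) j)
    have hd2 : koszulD K n I₂ i j
        = (E0.toLinearMap ∘ₗ koszulD K n I₁ i j) ∘ₗ E1.symm.toLinearMap := by
      rw [hcomm]
      ext z
      simp [E1]
    rw [hd2]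
    rw [LinearMap.range_comp, LinearEquiv.range, Submodule.map_top, LinearMap.range_comp]
    rw [LinearEquiv.finrank_map_eq]
  have hcyc : Module.finrank K (koszulCycles K n I₂ i j)
      = Module.finrank K (koszulCycles K n I₁ i j) := by
    cases i with
    | zero =>
      set E0 := (Finsupp.domLCongr (kbEquiv K n I₁ I₂ 0 j
        (fun m hm => by exact h m (by omega))) :
        KoszulChain K n I₁ 0 j ≃ₗ[K] KoszulChain K n I₂ 0 j)
      simp only [koszulCycles]
      show Module.finrank K (⊤ : Submodule K (KoszulChain K n I₂ 0 j))
        = Module.finrank K (⊤ : Submodule K (KoszulChain K n I₁ 0 j))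
      rw [finrank_top, finrank_top]
      exact E0.symm.finrank_eq
    | succ i' =>
      have hcomm := kd_comm K n I₁ I₂ i' j (fun m hm => h m (by omega))
      set E0 := (Finsupp.domLCongr (kbEquiv K n I₁ I₂ i' j
        (fun m hm => h m (by omega))) : KoszulChain K n I₁ i' j ≃ₗ[K] KoszulChain K n I₂ i' j)
      set E1 := (Finsupp.domLCongr (kbEquiv K n I₁ I₂ (i'+1) j
        (fun m hm => h m (by omega))) :
        KoszulChain K n I₁ (i'+1) j ≃ₗ[K] KoszulChain K n I₂ (i'+1) j)
      have hd2 : koszulD K n I₂ i' j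
          = (E0.toLinearMap ∘ₗ koszulD K n I₁ i' j) ∘ₗ E1.symm.toLinearMap := by
        rw [hcomm]
        ext z
        simp [E1]
      show Module.finrank K (LinearMap.ker (koszulD K n I₂ i' j))
        = Module.finrank K (LinearMap.ker (koszulD K n I₁ i' j))
      rw [hd2, LinearMap.ker_comp, LinearMap.ker_comp, LinearEquiv.ker,
        Submodule.comap_bot]
      rw [Submodule.comap_equiv_eq_map_symm E1.symm, LinearEquiv.symm_symm]
      exact LinearEquiv.finrank_map_eq E1 _
  rw [bettiQuot, bettiQuot, hErng, hcyc]

end Transfer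

noncomputable section Misc
variable {K : Type} [Field K] {n : ℕ}

lemma apply_le_mdeg (m : Fin n →₀ ℕ) (v : Fin n) : m v ≤ mdeg m := by
  classical
  by_cases h : v ∈ m.support
  · exact Finset.single_le_sum (f := fun t => m t) (fun _ _ => Nat.zero_le _) h
  · simp [Finsupp.notMem_support_iff.mp h]

lemma card_support_le_mdeg (m : Fin n →₀ ℕ) : m.support.card ≤ mdeg m := by
  classical
  rw [mdeg, Finsupp.sum]
  calc m.support.card = ∑ _v ∈ m.support, 1 := by simp
  _ ≤ ∑ v ∈ m.support, m v :=
      Finset.sum_le_sum fun v hv => Nat.one_le_iff_ne_zero.mpr (Finsupp.mem_support_iff.mp hv)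

lemma exists_two_le_of_card_lt {m : Fin n →₀ ℕ} (h : m.support.card < mdeg m) :
    ∃ v, 2 ≤ m v := by
  classical
  by_contra hcon
  push_neg at hcon
  have : mdeg m ≤ m.support.card := by
    rw [mdeg, Finsupp.sum]
    calc ∑ v ∈ m.support, m v ≤ ∑ _v ∈ m.support, 1 :=
          Finset.sum_le_sum fun v _ => by have := hcon v; omega
    _ = m.support.card := by simp
  omega

lemma sub_add_single_cancel {m : Fin n →₀ ℕ} {v : Fin n} (h : 1 ≤ m v) :
    m - Finsupp.single v 1 + Finsupp.single v 1 = m := by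
  ext t
  rcases eq_or_ne t v with rfl | ht
  · simp only [Finsupp.add_apply, Finsupp.tsub_apply, Finsupp.single_eq_same]
    omega
  · simp [Finsupp.single_eq_of_ne' (Ne.symm ht)]

lemma mdeg_sub_single {m : Fin n →₀ ℕ} {v : Fin n} (h : 1 ≤ m v) :
    mdeg (m - Finsupp.single v 1) + 1 = mdeg m := by
  conv_rhs => rw [← sub_add_single_cancel h]
  rw [mdeg_add, mdeg_single]

lemma support_sub_single {m : Fin n →₀ ℕ} {v : Fin n} (h : 2 ≤ m v) :
    (m - Finsupp.single v 1).support = m.support := by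
  ext t
  rcases eq_or_ne t v with rfl | ht
  · simp only [Finsupp.mem_support_iff, Finsupp.tsub_apply, Finsupp.single_eq_same]
    omega
  · simp [Finsupp.single_eq_of_ne' (Ne.symm ht)]

lemma support_add_single {m : Fin n →₀ ℕ} {v : Fin n} (h : 1 ≤ m v) :
    (m + Finsupp.single v 1).support = m.support := by
  ext t
  rcases eq_or_ne t v with rfl | ht
  · simp only [Finsupp.mem_support_iff, Finsupp.add_apply, Finsupp.single_eq_same]
    omega
  · simp [Finsupp.single_eq_of_ne' (Ne.symm ht)]

lemma sub_single_add_single {m : Fin n →₀ ℕ} {v s : Fin n} (h : 1 ≤ m v) :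
    m - Finsupp.single v 1 + Finsupp.single s 1
      = m + Finsupp.single s 1 - Finsupp.single v 1 := by
  ext t
  simp only [Finsupp.add_apply, Finsupp.tsub_apply, Finsupp.single_apply]
  split_ifs with h1 h2 <;> first | omega | (subst h1; omega)

lemma add_sub_single_cancel {m : Fin n →₀ ℕ} {v : Fin n} :
    m + Finsupp.single v 1 - Finsupp.single v 1 = m := by
  ext t
  rcases eq_or_ne t v with rfl | ht
  · simp only [Finsupp.add_apply, Finsupp.tsub_apply, Finsupp.single_eq_same]
    omega
  · simp [Finsupp.single_eq_of_ne' (Ne.symm ht)]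

lemma skel_faces_iff (Δ : ASC n) (k : ℤ) (hk : -1 ≤ k) (F : Finset (Fin n)) :
    F ∈ (Δ.skel k).faces ↔ F ∈ Δ.faces ∧ (F.card : ℤ) ≤ k + 1 := by
  constructor
  · intro h
    rcases Finset.mem_insert.mp h with rfl | h
    · exact ⟨Δ.empty_mem, by simp; omega⟩
    · exact Finset.mem_filter.mp h
  · intro ⟨h1, h2⟩
    exact Finset.mem_insert.mpr (Or.inr (Finset.mem_filter.mpr ⟨h1, h2⟩))

end Misc

noncomputable section Homotopy
variable (K : Type) [Field K] (n : ℕ)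

/-- vertices where the total multidegree of `(S, m)` is at least 2 -/
def pivotSet (S : Finset (Fin n)) (m : Fin n →₀ ℕ) : Finset (Fin n) :=
  Finset.univ.filter fun v => 2 ≤ m v + chiS S v

lemma pivot_congr {S₁ S₂ : Finset (Fin n)} {m₁ m₂ : Fin n →₀ ℕ}
    (h : ∀ v, m₁ v + chiS S₁ v = m₂ v + chiS S₂ v) :
    pivotSet n S₁ m₁ = pivotSet n S₂ m₂ := by
  unfold pivotSet
  ext v
  simp only [Finset.mem_filter, Finset.mem_univ, true_and, h v]

lemma pivot_erase {S : Finset (Fin n)} {m : Fin n →₀ ℕ} {s : Fin n} (hs : s ∈ S) :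
    pivotSet n (S.erase s) (m + Finsupp.single s 1) = pivotSet n S m := by
  refine pivot_congr n fun v => ?_
  simp only [Finsupp.add_apply, Finsupp.single_apply, chiS_apply, Finset.mem_erase]
  rcases eq_or_ne s v with rfl | hne
  · simp [hs]
  · simp [hne, Ne.symm hne]

lemma pivot_mem_two_le {S : Finset (Fin n)} {m : Fin n →₀ ℕ} {v : Fin n}
    (h : v ∈ pivotSet n S m) : 2 ≤ m v + chiS S v :=
  (Finset.mem_filter.mp h).2

lemma min'_congr {A B : Finset (Fin n)} (h : A = B) (hA : A.Nonempty) :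
    A.min' hA = B.min' (h ▸ hA) := by subst h; rfl

lemma single_cast {α : Type} {P : α → Prop} {x y : α} (h : x = y) (px : P x) (py : P y) :
    (Finsupp.single (⟨x, px⟩ : {a // P a}) (1:K)) = Finsupp.single ⟨y, py⟩ 1 := by
  subst h; rfl

open Classical in
/-- The `s`-th term of the Koszul differential, as a total function of the raw data. -/
def dTerm (I : Ideal (MvPolynomial (Fin n) K)) (i j : ℕ) (S : Finset (Fin n))
    (m : Fin n →₀ ℕ) (s : Fin n) : KoszulChain K n I i j :=
  if hc : S.card = i + 1 ∧ mdeg m + (i + 1) = j ∧ s ∈ S ∧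
      monomial (m + Finsupp.single s 1) (1:K) ∉ I then
    ((-1 : K) ^ (S.filter fun t => t < s).card) •
      Finsupp.single
        ⟨(S.erase s, m + Finsupp.single s 1),
          ⟨by rw [Finset.card_erase_of_mem hc.2.2.1, hc.1]; rfl,
           by rw [mdeg_add, mdeg_single]; omega,
           hc.2.2.2⟩⟩ (1:K)
  else 0

lemma koszulDElem_eq (I : Ideal (MvPolynomial (Fin n) K)) (i j : ℕ)
    (b : KoszulBasis K n I (i + 1) j) :
    koszulDElem K n I i j b = ∑ s ∈ b.1.1, dTerm K n I i j b.1.1 b.1.2 s := by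
  classical
  rw [← Finset.sum_attach b.1.1 (dTerm K n I i j b.1.1 b.1.2)]
  unfold koszulDElem
  refine Finset.sum_congr rfl fun s _ => ?_
  by_cases hP : monomial (b.1.2 + Finsupp.single s.1 1) (1:K) ∈ I
  · rw [dif_pos hP, smul_zero, dTerm, dif_neg (fun hc => hc.2.2.2 hP)]
  · rw [dif_neg hP, dTerm, dif_pos ⟨b.2.1, b.2.2.1, s.2, hP⟩]

open Classical in
/-- The homotopy applied to a basis element, as a total function of the raw data. -/
def hTerm (Γ : ASC n) (i j : ℕ) (S : Finset (Fin n)) (m : Fin n →₀ ℕ) :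
    KoszulChain K n (srIdeal K n Γ) (i + 1) j :=
  if hc : ∃ hT : (pivotSet n S m).Nonempty,
      (pivotSet n S m).min' hT ∉ S ∧ S.card = i ∧ mdeg m + i = j ∧
        monomial m (1:K) ∉ srIdeal K n Γ then
    ((-1 : K) ^ (S.filter fun t => t < (pivotSet n S m).min' hc.choose).card) •
      Finsupp.single
        ⟨(insert ((pivotSet n S m).min' hc.choose) S,
           m - Finsupp.single ((pivotSet n S m).min' hc.choose) 1),
          ⟨by rw [Finset.card_insert_of_notMem hc.choose_spec.1, hc.choose_spec.2.1],
           by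
             dsimp only
             have h2 : 2 ≤ m ((pivotSet n S m).min' hc.choose) := by
               have := pivot_mem_two_le n (Finset.min'_mem _ hc.choose)
               rwa [chiS_apply, if_neg hc.choose_spec.1, add_zero] at this
             have := mdeg_sub_single (v := (pivotSet n S m).min' hc.choose)
               (m := m) (by omega)
             have h3 := hc.choose_spec.2.2.1
             omega,
           by
             have h2 : 2 ≤ m ((pivotSet n S m).min' hc.choose) := by
               have := pivot_mem_two_le n (Finset.min'_mem _ hc.choose)
               rwa [chiS_apply, if_neg hc.choose_spec.1, add_zero] at this
             have h3 := hc.choose_spec.2.2.2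
             rw [monomial_mem_srIdeal_iff] at h3 ⊢
             rwa [support_sub_single h2]⟩⟩ (1:K)
  else 0

/-- evaluation of `hTerm` with an explicit pivot vertex -/
lemma hTerm_eval (Γ : ASC n) (i j : ℕ) (S : Finset (Fin n)) (m : Fin n →₀ ℕ) (v : Fin n)
    (hT : (pivotSet n S m).Nonempty) (hveq : (pivotSet n S m).min' hT = v)
    (hv : v ∉ S) (h1 : S.card = i) (h2 : mdeg m + i = j)
    (h3 : monomial m (1:K) ∉ srIdeal K n Γ) (h4 : 2 ≤ m v) :
    hTerm K n Γ i j S m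
      = ((-1 : K) ^ (S.filter fun t => t < v).card) •
        Finsupp.single
          ⟨(insert v S, m - Finsupp.single v 1),
            ⟨by rw [Finset.card_insert_of_notMem hv, h1],
             by dsimp only; have := mdeg_sub_single (v := v) (m := m) (by omega); omega,
             by rw [monomial_mem_srIdeal_iff] at h3 ⊢; rwa [support_sub_single h4]⟩⟩
          (1:K) := by
  subst hveq
  have hcond : ∃ hT' : (pivotSet n S m).Nonempty,
      (pivotSet n S m).min' hT' ∉ S ∧ S.card = i ∧ mdeg m + i = j ∧
        monomial m (1:K) ∉ srIdeal K n Γ := ⟨hT, hv, h1, h2, h3⟩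
  rw [hTerm, dif_pos hcond]

lemma hTerm_zero_of_mem (Γ : ASC n) (i j : ℕ) (S : Finset (Fin n)) (m : Fin n →₀ ℕ)
    (hT : (pivotSet n S m).Nonempty) (hv : (pivotSet n S m).min' hT ∈ S) :
    hTerm K n Γ i j S m = 0 := by
  rw [hTerm, dif_neg]
  rintro ⟨hT', hv', -⟩
  exact hv' hv

/-- The homotopy operator. -/
def Hmap (Γ : ASC n) (i j : ℕ) :
    KoszulChain K n (srIdeal K n Γ) i j →ₗ[K] KoszulChain K n (srIdeal K n Γ) (i + 1) j :=
  Finsupp.lsum K fun b => LinearMap.toSpanSingleton K _ (hTerm K n Γ i j b.1.1 b.1.2)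

end Homotopy

noncomputable section Signs
variable {K : Type} [Field K] {n : ℕ}

lemma neg_one_pow_mul_self (e : ℕ) : (-1:K)^e * (-1:K)^e = 1 := by
  rw [← pow_add]
  exact Even.neg_one_pow ⟨e, rfl⟩

lemma filter_lt_insert {S : Finset (Fin n)} {v : Fin n} (hv : v ∉ S) (s : Fin n) :
    ((insert v S).filter fun t => t < s).card
      = (S.filter fun t => t < s).card + (if v < s then 1 else 0) := by
  classical
  rw [Finset.filter_insert]
  split
  · rw [Finset.card_insert_of_notMem fun h => hv (Finset.mem_of_mem_filter v h)]
  · rw [add_zero]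

lemma filter_lt_erase {S : Finset (Fin n)} {s : Fin n} (hs : s ∈ S) (v : Fin n) :
    ((S.erase s).filter fun t => t < v).card
      = (S.filter fun t => t < v).card - (if s < v then 1 else 0) := by
  classical
  rw [Finset.filter_erase, Finset.card_erase_eq_ite]
  split
  · next h => rw [if_pos (Finset.mem_filter.mp h).2]
  · next h =>
    rw [if_neg fun hlt => h (Finset.mem_filter.mpr ⟨hs, hlt⟩), Nat.sub_zero]

lemma sign_identity (S : Finset (Fin n)) (v s : Fin n) (hv : v ∉ S) (hs : s ∈ S) :
    (-1:K)^(S.filter fun t => t < v).card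
        * (-1:K)^((insert v S).filter fun t => t < s).card
      + (-1:K)^(S.filter fun t => t < s).card
        * (-1:K)^((S.erase s).filter fun t => t < v).card = 0 := by
  classical
  rw [filter_lt_insert hv s, filter_lt_erase hs v]
  have hvs : v ≠ s := fun h => hv (h ▸ hs)
  rcases lt_or_gt_of_ne hvs with h | h
  · rw [if_pos h, if_neg (asymm h), Nat.sub_zero, pow_succ]
    ring
  · rw [if_neg (asymm h), if_pos h, add_zero]
    have hA : 1 ≤ (S.filter fun t => t < v).card :=
      Finset.card_pos.mpr ⟨s, Finset.mem_filter.mpr ⟨hs, h⟩⟩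
    obtain ⟨A', hA'⟩ : ∃ A', (S.filter fun t => t < v).card = A' + 1 :=
      ⟨_, (Nat.succ_pred_eq_of_pos hA).symm⟩
    rw [hA', Nat.add_sub_cancel, pow_succ]
    ring

lemma cancel_smul_single {α : Type} {P : α → Prop} {x y : α} (hxy : x = y)
    (px : P x) (py : P y) (c d : K) (hcd : c + d = 0) :
    c • Finsupp.single (⟨x, px⟩ : {a // P a}) (1:K)
      + d • Finsupp.single ⟨y, py⟩ (1:K) = 0 := by
  subst hxy
  rw [← add_smul, hcd, zero_smul]

lemma smul_smul_single_cast {α : Type} {P : α → Prop} {x y : α} (hxy : x = y)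
    (px : P x) (py : P y) (c d : K) (hcd : c * d = 1) :
    c • (d • Finsupp.single (⟨x, px⟩ : {a // P a}) (1:K))
      = Finsupp.single (⟨y, py⟩ : {a // P a}) (1:K) := by
  subst hxy
  rw [smul_smul, hcd, one_smul]

end Signs

noncomputable section ApplySingles
variable (K : Type) [Field K] (n : ℕ)

lemma Hmap_single (Γ : ASC n) (i j : ℕ) (b : KoszulBasis K n (srIdeal K n Γ) i j) (c : K) :
    Hmap K n Γ i j (Finsupp.single b c) = c • hTerm K n Γ i j b.1.1 b.1.2 := by
  rw [Hmap, Finsupp.lsum_single, LinearMap.toSpanSingleton_apply]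

lemma koszulD_single (I : Ideal (MvPolynomial (Fin n) K)) (i j : ℕ)
    (b : KoszulBasis K n I (i+1) j) (c : K) :
    koszulD K n I i j (Finsupp.single b c) = c • koszulDElem K n I i j b := by
  rw [koszulD, Finsupp.lsum_single, LinearMap.toSpanSingleton_apply]

end ApplySingles

noncomputable section KeyZero
variable (K : Type) [Field K] (n : ℕ)

lemma key_zero (Γ : ASC n) (j : ℕ) (b : KoszulBasis K n (srIdeal K n Γ) 0 j)
    (hb : ∃ v, 2 ≤ b.1.2 v) :
    koszulD K n (srIdeal K n Γ) 0 j (hTerm K n Γ 0 j b.1.1 b.1.2)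
      = Finsupp.single b 1 := by
  classical
  obtain ⟨⟨S, m⟩, hbc⟩ := b
  obtain ⟨hbcard, hbmdeg, hbmem⟩ := hbc
  dsimp only at hbcard hbmdeg hbmem hb ⊢
  have hSe : S = ∅ := Finset.card_eq_zero.mp hbcard
  subst hSe
  have hT : (pivotSet n (∅ : Finset (Fin n)) m).Nonempty := by
    obtain ⟨w, hw⟩ := hb
    exact ⟨w, Finset.mem_filter.mpr ⟨Finset.mem_univ _, by omega⟩⟩
  set v := (pivotSet n (∅ : Finset (Fin n)) m).min' hT with hvdef
  have hv2 : 2 ≤ m v + chiS (∅ : Finset (Fin n)) v :=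
    pivot_mem_two_le n (Finset.min'_mem _ hT)
  have hvS : v ∉ (∅ : Finset (Fin n)) := Finset.notMem_empty v
  have hmv2 : 2 ≤ m v := by
    have : chiS (∅ : Finset (Fin n)) v = 0 := by rw [chiS_apply, if_neg hvS]
    omega
  rw [hTerm_eval K n Γ 0 j ∅ m v hT hvdef.symm hvS hbcard hbmdeg hbmem hmv2]
  erw [map_smul, koszulD_single, one_smul, koszulDElem_eq]
  dsimp only
  rw [Finset.sum_insert hvS, Finset.sum_empty, add_zero]
  have hcond : (insert v (∅ : Finset (Fin n))).card = 0 + 1 ∧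
      mdeg (m - Finsupp.single v 1) + (0 + 1) = j ∧ v ∈ insert v (∅ : Finset (Fin n)) ∧
      monomial (m - Finsupp.single v 1 + Finsupp.single v 1) (1:K) ∉ srIdeal K n Γ := by
    refine ⟨by simp, ?_, Finset.mem_insert_self _ _, ?_⟩
    · have := mdeg_sub_single (m := m) (v := v) (by omega)
      omega
    · rwa [sub_add_single_cancel (by omega : 1 ≤ m v)]
  rw [dTerm, dif_pos hcond]
  refine smul_smul_single_cast ?_ _ _ _ _ ?_
  · refine Prod.ext ?_ ?_
    · dsimp only
      rw [Finset.erase_insert hvS]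
    · dsimp only
      rw [sub_add_single_cancel (by omega : 1 ≤ m v)]
  · have hfe : ((insert v (∅ : Finset (Fin n))).filter fun t => t < v).card
        = ((∅ : Finset (Fin n)).filter (fun t => t < v)).card := by
      rw [filter_lt_insert hvS v, if_neg (lt_irrefl v), add_zero]
    rw [hfe]
    exact neg_one_pow_mul_self _

end KeyZero

noncomputable section KeySucc
variable (K : Type) [Field K] (n : ℕ)

lemma dTerm_eval (I : Ideal (MvPolynomial (Fin n) K)) (i j : ℕ) (S : Finset (Fin n))
    (m : Fin n →₀ ℕ) (s : Fin n) (h1 : S.card = i + 1) (h2 : mdeg m + (i + 1) = j)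
    (h3 : s ∈ S) (h4 : monomial (m + Finsupp.single s 1) (1:K) ∉ I) :
    dTerm K n I i j S m s
      = ((-1:K) ^ (S.filter fun t => t < s).card) •
        Finsupp.single
          ⟨(S.erase s, m + Finsupp.single s 1),
            ⟨by rw [Finset.card_erase_of_mem h3, h1]; rfl,
             by rw [mdeg_add, mdeg_single]; omega, h4⟩⟩ (1:K) := by
  rw [dTerm, dif_pos ⟨h1, h2, h3, h4⟩]

lemma key_succ (Γ : ASC n) (i j : ℕ) (b : KoszulBasis K n (srIdeal K n Γ) (i+1) j)
    (hb : ∃ v, 2 ≤ b.1.2 v) :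
    koszulD K n (srIdeal K n Γ) (i+1) j (hTerm K n Γ (i+1) j b.1.1 b.1.2)
      + Hmap K n Γ i j (koszulDElem K n (srIdeal K n Γ) i j b)
      = Finsupp.single b 1 := by
  classical
  obtain ⟨⟨S, m⟩, hbc⟩ := b
  obtain ⟨hbcard, hbmdeg, hbmem⟩ := hbc
  dsimp only at hbcard hbmdeg hbmem hb ⊢
  have hT : (pivotSet n S m).Nonempty := by
    obtain ⟨w, hw⟩ := hb
    exact ⟨w, Finset.mem_filter.mpr ⟨Finset.mem_univ _, by omega⟩⟩
  set v := (pivotSet n S m).min' hT with hvdef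
  have hv2 : 2 ≤ m v + chiS S v := pivot_mem_two_le n (Finset.min'_mem _ hT)
  by_cases hvS : v ∈ S
  · -- pivot vertex inside S : hTerm vanishes, the homotopy term gives the identity
    rw [hTerm_zero_of_mem K n Γ (i+1) j S m hT (hvdef ▸ hvS), map_zero, zero_add]
    rw [koszulDElem_eq K n _ i j ⟨(S, m), hbcard, hbmdeg, hbmem⟩]
    dsimp only
    rw [map_sum]
    have hmv1 : 1 ≤ m v := by
      have : chiS S v = 1 := by rw [chiS_apply, if_pos hvS]
      omega
    rw [Finset.sum_eq_single_of_mem v hvS ?side]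
    case side =>
      intro s hsS hsv
      rw [dTerm]
      split
      · next hc =>
        erw [map_smul, Hmap_single]
        dsimp only
        have hpe : pivotSet n (S.erase s) (m + Finsupp.single s 1) = pivotSet n S m :=
          pivot_erase n hsS
        have hT3 : (pivotSet n (S.erase s) (m + Finsupp.single s 1)).Nonempty := by
          rw [hpe]; exact hT
        have hveq3 : (pivotSet n (S.erase s) (m + Finsupp.single s 1)).min' hT3 = v :=
          min'_congr n hpe hT3
        rw [hTerm_zero_of_mem K n Γ i j _ _ hT3
          (by rw [hveq3]; exact Finset.mem_erase.mpr ⟨fun h => hsv (h.symm), hvS⟩)]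
        simp only [smul_zero]
      · next hc => rw [map_zero]
    -- main term s = v
    have hmem2 : monomial (m + Finsupp.single v 1) (1:K) ∉ srIdeal K n Γ := by
      rw [monomial_mem_srIdeal_iff] at hbmem ⊢
      rwa [support_add_single hmv1]
    rw [dTerm, dif_pos ⟨hbcard, hbmdeg, hvS, hmem2⟩]
    erw [map_smul, Hmap_single]
    dsimp only
    have hpe : pivotSet n (S.erase v) (m + Finsupp.single v 1) = pivotSet n S m :=
      pivot_erase n hvS
    have hT2 : (pivotSet n (S.erase v) (m + Finsupp.single v 1)).Nonempty := by
      rw [hpe]; exact hT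
    have hveq2 : (pivotSet n (S.erase v) (m + Finsupp.single v 1)).min' hT2 = v :=
      min'_congr n hpe hT2
    rw [hTerm_eval K n Γ i j (S.erase v) (m + Finsupp.single v 1) v hT2 hveq2
      (Finset.notMem_erase v S)
      (by rw [Finset.card_erase_of_mem hvS, hbcard]; rfl)
      (by rw [mdeg_add, mdeg_single]; omega)
      hmem2
      (by rw [Finsupp.add_apply, Finsupp.single_eq_same]; omega)]
    rw [one_smul]
    refine smul_smul_single_cast ?_ _ _ _ _ ?_
    · refine Prod.ext ?_ ?_
      · dsimp only
        rw [Finset.insert_erase hvS]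
      · dsimp only
        rw [add_sub_single_cancel]
    · have hfe : ((S.erase v).filter fun t => t < v).card
          = (S.filter fun t => t < v).card := by
        rw [filter_lt_erase hvS v, if_neg (lt_irrefl v), Nat.sub_zero]
      rw [hfe]
      exact neg_one_pow_mul_self _
  · -- pivot vertex outside S
    have hmv2 : 2 ≤ m v := by
      have : chiS S v = 0 := by rw [chiS_apply, if_neg hvS]
      omega
    rw [hTerm_eval K n Γ (i+1) j S m v hT hvdef.symm hvS hbcard hbmdeg hbmem hmv2]
    erw [map_smul, koszulD_single, one_smul, koszulDElem_eq]
    dsimp only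
    rw [Finset.sum_insert hvS]
    have hcondv : (insert v S).card = (i+1) + 1 ∧
        mdeg (m - Finsupp.single v 1) + ((i+1) + 1) = j ∧ v ∈ insert v S ∧
        monomial (m - Finsupp.single v 1 + Finsupp.single v 1) (1:K) ∉ srIdeal K n Γ := by
      refine ⟨by rw [Finset.card_insert_of_notMem hvS, hbcard], ?_,
        Finset.mem_insert_self _ _, ?_⟩
      · have := mdeg_sub_single (m := m) (v := v) (by omega)
        omega
      · rwa [sub_add_single_cancel (by omega : 1 ≤ m v)]
    rw [smul_add]
    have hA : ((-1:K) ^ (S.filter fun t => t < v).card) •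
        dTerm K n (srIdeal K n Γ) (i+1) j (insert v S) (m - Finsupp.single v 1) v
        = Finsupp.single ⟨(S, m), ⟨hbcard, hbmdeg, hbmem⟩⟩ (1:K) := by
      rw [dTerm_eval K n (srIdeal K n Γ) (i+1) j (insert v S) (m - Finsupp.single v 1) v
        hcondv.1 hcondv.2.1 hcondv.2.2.1 hcondv.2.2.2]
      refine smul_smul_single_cast ?_ _ _ _ _ ?_
      · refine Prod.ext ?_ ?_
        · dsimp only
          rw [Finset.erase_insert hvS]
        · dsimp only
          rw [sub_add_single_cancel (by omega : 1 ≤ m v)]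
      · rw [filter_lt_insert hvS v, if_neg (lt_irrefl v), add_zero]
        exact neg_one_pow_mul_self _
    rw [hA]
    erw [koszulDElem_eq]
    dsimp only
    rw [map_sum, Finset.smul_sum, add_assoc, ← Finset.sum_add_distrib]
    rw [show ∑ s ∈ S,
        (((-1:K) ^ (S.filter fun t => t < v).card) •
            dTerm K n (srIdeal K n Γ) (i+1) j (insert v S) (m - Finsupp.single v 1) s
          + Hmap K n Γ i j (dTerm K n (srIdeal K n Γ) i j S m s)) = 0 from ?_]
    · rw [add_zero]
    refine Finset.sum_eq_zero fun s hsS => ?_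
    have hvs : v ≠ s := fun h => hvS (h ▸ hsS)
    by_cases hPs : monomial (m + Finsupp.single s 1) (1:K) ∈ srIdeal K n Γ
    · -- both terms vanish
      have h1 : dTerm K n (srIdeal K n Γ) i j S m s = 0 := by
        rw [dTerm, dif_neg fun hc => hc.2.2.2 hPs]
      have h2 : dTerm K n (srIdeal K n Γ) (i+1) j (insert v S) (m - Finsupp.single v 1) s
          = 0 := by
        rw [dTerm]
        refine dif_neg fun hc => hc.2.2.2 ?_
        rw [sub_single_add_single (by omega : 1 ≤ m v)]
        rw [monomial_mem_srIdeal_iff] at hPs ⊢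
        rwa [support_sub_single
          (show 2 ≤ (m + Finsupp.single s 1 : Fin n →₀ ℕ) v by
            rw [Finsupp.add_apply]; omega)]
      rw [h1, h2, smul_zero, map_zero, add_zero]
    · -- both terms survive and cancel
      have hms2 : 2 ≤ (m + Finsupp.single s 1 : Fin n →₀ ℕ) v := by
        rw [Finsupp.add_apply]; omega
      have hPs' : monomial (m + Finsupp.single s 1 - Finsupp.single v 1) (1:K)
          ∉ srIdeal K n Γ := by
        rw [monomial_mem_srIdeal_iff] at hPs ⊢
        rwa [support_sub_single hms2]
      have hconds : (insert v S).card = (i+1) + 1 ∧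
          mdeg (m - Finsupp.single v 1) + ((i+1) + 1) = j ∧ s ∈ insert v S ∧
          monomial (m - Finsupp.single v 1 + Finsupp.single s 1) (1:K) ∉ srIdeal K n Γ := by
        refine ⟨by rw [Finset.card_insert_of_notMem hvS, hbcard], ?_,
          Finset.mem_insert_of_mem hsS, ?_⟩
        · have := mdeg_sub_single (m := m) (v := v) (by omega)
          omega
        · rwa [sub_single_add_single (by omega : 1 ≤ m v)]
      rw [dTerm_eval K n (srIdeal K n Γ) (i+1) j (insert v S) (m - Finsupp.single v 1) s
        hconds.1 hconds.2.1 hconds.2.2.1 hconds.2.2.2]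
      rw [dTerm_eval K n (srIdeal K n Γ) i j S m s hbcard hbmdeg hsS hPs]
      erw [map_smul, Hmap_single, one_smul]
      dsimp only
      have hpe : pivotSet n (S.erase s) (m + Finsupp.single s 1) = pivotSet n S m :=
        pivot_erase n hsS
      have hT4 : (pivotSet n (S.erase s) (m + Finsupp.single s 1)).Nonempty := by
        rw [hpe]; exact hT
      have hveq4 : (pivotSet n (S.erase s) (m + Finsupp.single s 1)).min' hT4 = v :=
        min'_congr n hpe hT4
      rw [hTerm_eval K n Γ i j (S.erase s) (m + Finsupp.single s 1) v hT4 hveq4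
        (fun h => hvS (Finset.mem_of_mem_erase h))
        (by rw [Finset.card_erase_of_mem hsS, hbcard]; rfl)
        (by rw [mdeg_add, mdeg_single]; omega)
        hPs hms2]
      rw [smul_smul, smul_smul]
      refine cancel_smul_single ?_ _ _ _ _ ?_
      · refine Prod.ext ?_ ?_
        · dsimp only
          rw [Finset.erase_insert_of_ne hvs]
        · dsimp only
          rw [sub_single_add_single (by omega : 1 ≤ m v)]
      · exact sign_identity S v s hvS hsS

end KeySucc

noncomputable section Vanish
variable (K : Type) [Field K] (n : ℕ)

instance kbFinite (I : Ideal (MvPolynomial (Fin n) K)) (i j : ℕ) :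
    Finite (KoszulBasis K n I i j) := by
  have hbd : ∀ b : KoszulBasis K n I i j, ∀ v, b.1.2 v < j + 1 := by
    intro b v
    have h1 := apply_le_mdeg b.1.2 v
    have h2 := b.2.2.1
    omega
  refine Finite.of_injective
    (fun b : KoszulBasis K n I i j =>
      ((b.1.1, fun v => (⟨b.1.2 v, hbd b v⟩ : Fin (j+1)))
        : Finset (Fin n) × (Fin n → Fin (j+1)))) ?_
  intro b c hbc
  rw [Prod.mk.injEq] at hbc
  refine Subtype.ext (Prod.ext hbc.1 (Finsupp.ext fun v => ?_))
  exact congrArg Fin.val (congrFun hbc.2 v)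

instance kcFinite (I : Ideal (MvPolynomial (Fin n) K)) (i j : ℕ) :
    Module.Finite K (KoszulChain K n I i j) := by
  haveI : Fintype (KoszulBasis K n I i j) := Fintype.ofFinite _
  exact Module.Finite.equiv (Finsupp.linearEquivFunOnFinite K K _).symm

lemma h_id_zero (Γ : ASC n) (j : ℕ)
    (hgood : ∀ b : KoszulBasis K n (srIdeal K n Γ) 0 j, ∃ v, 2 ≤ b.1.2 v) :
    koszulD K n (srIdeal K n Γ) 0 j ∘ₗ Hmap K n Γ 0 j = LinearMap.id := by
  apply Finsupp.lhom_ext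
  intro b c
  simp only [LinearMap.comp_apply, LinearMap.id_apply]
  rw [Hmap_single, map_smul, key_zero K n Γ j b (hgood b), Finsupp.smul_single,
    smul_eq_mul, mul_one]

lemma h_id_succ (Γ : ASC n) (i j : ℕ)
    (hgood : ∀ b : KoszulBasis K n (srIdeal K n Γ) (i+1) j, ∃ v, 2 ≤ b.1.2 v) :
    koszulD K n (srIdeal K n Γ) (i+1) j ∘ₗ Hmap K n Γ (i+1) j
      + Hmap K n Γ i j ∘ₗ koszulD K n (srIdeal K n Γ) i j = LinearMap.id := by
  apply Finsupp.lhom_ext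
  intro b c
  simp only [LinearMap.add_apply, LinearMap.comp_apply, LinearMap.id_apply]
  rw [Hmap_single, koszulD_single, map_smul, map_smul, ← smul_add,
    key_succ K n Γ i j b (hgood b), Finsupp.smul_single, smul_eq_mul, mul_one]

lemma bettiQuot_vanish (Γ : ASC n) (c : ℕ) (hc : ∀ F ∈ Γ.faces, F.card ≤ c)
    (i j : ℕ) (hij : i + c < j) : bettiQuot K n (srIdeal K n Γ) i j = 0 := by
  have hgood : ∀ b : KoszulBasis K n (srIdeal K n Γ) i j, ∃ v, 2 ≤ b.1.2 v := by
    intro b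
    have hmem := b.2.2.2
    have hsupp : b.1.2.support ∈ Γ.faces := by
      by_contra h
      exact hmem ((monomial_mem_srIdeal_iff Γ b.1.2).mpr h)
    have hcard := hc _ hsupp
    have hmdeg := b.2.2.1
    exact exists_two_le_of_card_lt (by omega)
  have hle : koszulCycles K n (srIdeal K n Γ) i j
      ≤ LinearMap.range (koszulD K n (srIdeal K n Γ) i j) := by
    cases i with
    | zero =>
      intro z _
      exact ⟨Hmap K n Γ 0 j z,
        LinearMap.congr_fun (h_id_zero K n Γ j hgood) z⟩
    | succ i' =>
      intro z hz
      have hdz : koszulD K n (srIdeal K n Γ) i' j z = 0 := hz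
      have hid := LinearMap.congr_fun (h_id_succ K n Γ i' j hgood) z
      simp only [LinearMap.add_apply, LinearMap.comp_apply, LinearMap.id_apply] at hid
      rw [hdz, map_zero, add_zero] at hid
      exact ⟨Hmap K n Γ (i'+1) j z, hid⟩
  have hfr := Submodule.finrank_mono hle
  rw [bettiQuot]
  omega

end Vanish

/-- For `-1 ≤ k < dim Δ`, the graded Betti numbers of the `k`-skeleton
agree with those of `Δ` strictly above the row `k + 1` of the Betti table and vanish
strictly below it. -/
theorem betti_skeleton_rows (n : ℕ) (K : Type) [Field K] (Δ : ASC n)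
    (hvert : ∀ v : Fin n, {v} ∈ Δ.faces)
    (k : ℤ) (h1 : -1 ≤ k) (h2 : k < Δ.dim) :
    (∀ i j : ℕ, (j : ℤ) < k + 1 →
      bettiSR K n (Δ.skel k) i (i + j) = bettiSR K n Δ i (i + j)) ∧
    (∀ i j : ℕ, (j : ℤ) > k + 1 → bettiSR K n (Δ.skel k) i (i + j) = 0) := by
  constructor
  · intro i j hj
    rw [bettiSR, bettiSR]
    apply bettiQuot_congr
    intro m hm
    rw [monomial_mem_srIdeal_iff, monomial_mem_srIdeal_iff]
    have hsup := card_support_le_mdeg m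
    have hcard : ((m.support.card : ℕ) : ℤ) ≤ k + 1 := by
      have hmd : mdeg m ≤ j + 1 := by omega
      have : ((mdeg m : ℕ) : ℤ) ≤ (j : ℤ) + 1 := by exact_mod_cast hmd
      have h3 : ((m.support.card : ℕ) : ℤ) ≤ (mdeg m : ℤ) := by exact_mod_cast hsup
      omega
    rw [not_iff_not]
    rw [skel_faces_iff Δ k h1]
    exact ⟨fun h => h.1, fun h => ⟨h, hcard⟩⟩
  · intro i j hj
    rw [bettiSR]
    apply bettiQuot_vanish K n (Δ.skel k) (k + 1).toNat
    · intro F hF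
      rw [skel_faces_iff Δ k h1] at hF
      have := hF.2
      omega
    · omega
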